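/- arXiv:2109.00613 — 3 statements merged into one kernel-verified Lean document; each statement's English description precedes it below -/
import Mathlib

section
/- Let 𝓑 be a Steiner system S(t,w,n) with 1 ≤ t ≤ w and 2w ≤ n, and let 𝓑̄ = { (Fin n) \ B : B ∈ 𝓑 } be the family of complements of its blocks. Then 𝓑̄ is a family of (n−w)-element subsets of Fin n in which any two distinct members have Johnson distance at least w−t+1, it satisfies |𝓑̄| · C(n−t, w−t) = C(n, n−w), and every family A of (n−w)-element subsets of Fin n with pairwise Johnson distance at most w−t satisfies |A| ≤ C(n−t, w−t). -/
/-! Two distinct blocks of a Steiner system share fewer than `t` points, so the complements of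
distinct blocks are at Johnson distance more than `w - t`, and double counting `t`-subsets gives
`|𝓑| C(w,t) = C(n,t)`, which is the size identity. The anticode bound is the code–anticode bound
of the Johnson scheme: a permutation of the ground set carries at most one member of an anticode
of diameter `D` onto a member of a code of minimum distance `> D`, while any two `k`-sets are
carried onto each other by exactly `k! (n - k)!` permutations, so `|A| |C| k! (n - k)! ≤ n!`. -/

open Finset Equiv
open scoped Pointwise Nat

theorem Equiv.Perm.exists_smul_finset_eq {α : Type*} [DecidableEq α] {s t : Finset α}
    (h : #s = #t) : ∃ σ : Perm α, σ • s = t := by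
  obtain ⟨σ, hσ⟩ := Perm.exists_map_finset_eq s t h
  exact ⟨σ, by rw [← hσ, map_eq_image]; rfl⟩

section PermsCarrying

variable {α : Type*} [Fintype α] [DecidableEq α]

def permsCarrying (s t : Finset α) : Finset (Perm α) := {σ | σ • s = t}

theorem mem_permsCarrying {s t : Finset α} {σ : Perm α} : σ ∈ permsCarrying s t ↔ σ • s = t := by
  simp [permsCarrying]

theorem card_permsCarrying_eq_card_permsCarrying_self {s t : Finset α} (h : #s = #t) :
    #(permsCarrying s t) = #(permsCarrying s s) := by
  obtain ⟨υ, rfl⟩ := Perm.exists_smul_finset_eq h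
  refine card_nbij' (υ⁻¹ * ·) (υ * ·) ?_ ?_ (fun σ _ => by simp) (fun σ _ => by simp)
  · intro σ hσ
    rw [mem_coe, mem_permsCarrying] at hσ ⊢
    rw [mul_smul, hσ, inv_smul_smul]
  · intro σ hσ
    rw [mem_coe, mem_permsCarrying] at hσ ⊢
    rw [mul_smul, hσ]

theorem card_permsCarrying {s t : Finset α} (h : #s = #t) :
    #(permsCarrying s t) = (#s)! * (Fintype.card α - #s)! := by
  rw [card_permsCarrying_eq_card_permsCarrying_self h]
  have hs : #s ≤ Fintype.card α := card_le_univ s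
  have hcount : #(univ : Finset (Perm α)) * 1 =
      #(powersetCard #s (univ : Finset α)) * #(permsCarrying s s) := by
    refine card_mul_eq_card_mul (fun σ c => σ • s = c) (fun σ _ => ?_) (fun c hc => ?_)
    · rw [card_eq_one]
      refine ⟨σ • s, eq_singleton_iff_unique_mem.mpr ⟨?_, fun c hc => (mem_filter.mp hc).2.symm⟩⟩
      simp [bipartiteAbove, card_smul_finset]
    · exact card_permsCarrying_eq_card_permsCarrying_self (mem_powersetCard.mp hc).2.symm
  rw [card_univ, Fintype.card_perm, mul_one, card_powersetCard, card_univ,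
    ← Nat.choose_mul_factorial_mul_factorial hs, mul_assoc] at hcount
  exact (Nat.eq_of_mul_eq_mul_left (Nat.choose_pos hs) hcount).symm

theorem card_mul_card_le_choose_of_diam_lt_dist {k D : ℕ} {A C : Finset (Finset α)}
    (hA : ∀ S ∈ A, #S = k) (hC : ∀ X ∈ C, #X = k)
    (hAdiam : ∀ S₁ ∈ A, ∀ S₂ ∈ A, #(S₁ \ S₂) ≤ D)
    (hCdist : ∀ X₁ ∈ C, ∀ X₂ ∈ C, X₁ ≠ X₂ → D < #(X₁ \ X₂)) :
    #A * #C ≤ (Fintype.card α).choose k := by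
  rcases A.eq_empty_or_nonempty with rfl | ⟨S, hS⟩
  · simp
  have hk : k ≤ Fintype.card α := hA S hS ▸ card_le_univ S
  have hcount : #(A ×ˢ C) * (k ! * (Fintype.card α - k)!) ≤ #(univ : Finset (Perm α)) * 1 := by
    refine card_mul_le_card_mul (fun p σ => σ • p.1 = p.2) (fun p hp => ?_) (fun σ _ => ?_)
    · obtain ⟨hp₁, hp₂⟩ := mem_product.mp hp
      have := card_permsCarrying ((hA _ hp₁).trans (hC _ hp₂).symm)
      rw [hA _ hp₁] at this
      exact this.ge
    · refine card_le_one.mpr fun p hp q hq => ?_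
      simp only [bipartiteBelow, mem_filter, mem_product] at hp hq
      obtain ⟨⟨hp₁, hp₂⟩, hpσ⟩ := hp
      obtain ⟨⟨hq₁, hq₂⟩, hqσ⟩ := hq
      have h₂ : p.2 = q.2 := by
        by_contra hne
        have hle : #(p.2 \ q.2) ≤ D := by
          rw [← hpσ, ← hqσ, ← smul_finset_sdiff, card_smul_finset]
          exact hAdiam _ hp₁ _ hq₁
        exact (hCdist _ hp₂ _ hq₂ hne).not_ge hle
      have h₁ : p.1 = q.1 := MulAction.injective σ (hpσ.trans (h₂.trans hqσ.symm))
      exact Prod.ext h₁ h₂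
  rw [card_product, card_univ, Fintype.card_perm, mul_one,
    ← Nat.choose_mul_factorial_mul_factorial hk, mul_assoc _ k !] at hcount
  exact Nat.le_of_mul_le_mul_right hcount (by positivity)

end PermsCarrying

def IsSteinerSystem {α : Type*} (t : ℕ) (𝓑 : Finset (Finset α)) : Prop :=
  ∀ T : Finset α, #T = t → ∃! B, B ∈ 𝓑 ∧ T ⊆ B

namespace IsSteinerSystem

variable {α : Type*} [DecidableEq α] {t w : ℕ} {𝓑 : Finset (Finset α)}

theorem card_inter_lt (h𝓑 : IsSteinerSystem t 𝓑) {B₁ B₂ : Finset α} (h₁ : B₁ ∈ 𝓑)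
    (h₂ : B₂ ∈ 𝓑) (hne : B₁ ≠ B₂) : #(B₁ ∩ B₂) < t := by
  by_contra! hle
  obtain ⟨T, hT, hTcard⟩ := exists_subset_card_eq hle
  exact hne ((h𝓑 T hTcard).unique ⟨h₁, hT.trans inter_subset_left⟩
    ⟨h₂, hT.trans inter_subset_right⟩)

theorem sub_add_one_le_card_sdiff (h𝓑 : IsSteinerSystem t 𝓑) (hblocks : ∀ B ∈ 𝓑, #B = w)
    {B₁ B₂ : Finset α} (h₁ : B₁ ∈ 𝓑) (h₂ : B₂ ∈ 𝓑) (hne : B₁ ≠ B₂) :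
    w - t + 1 ≤ #(B₁ \ B₂) := by
  have hinter := h𝓑.card_inter_lt h₁ h₂ hne
  have hsplit := card_sdiff_add_card_inter B₁ B₂
  have hpos : 0 < #(B₁ \ B₂) := card_pos.mpr <| sdiff_nonempty.mpr fun hsub =>
    hne (eq_of_subset_of_card_le hsub (by rw [hblocks B₁ h₁, hblocks B₂ h₂]))
  have := hblocks B₁ h₁
  omega

theorem card_mul_choose [Fintype α] (h𝓑 : IsSteinerSystem t 𝓑) (hblocks : ∀ B ∈ 𝓑, #B = w) :
    #𝓑 * w.choose t = (Fintype.card α).choose t := by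
  have hcount : #𝓑 * w.choose t = #(powersetCard t (univ : Finset α)) * 1 := by
    refine card_mul_eq_card_mul (fun B T => T ⊆ B) (fun B hB => ?_) (fun T hT => ?_)
    · have : (powersetCard t univ).bipartiteAbove (fun B T => T ⊆ B) B = powersetCard t B := by
        ext T
        simp [bipartiteAbove, and_comm]
      rw [this, card_powersetCard, hblocks B hB]
    · obtain ⟨B, hB, hunique⟩ := h𝓑 T (mem_powersetCard.mp hT).2
      exact card_eq_one.mpr ⟨B, eq_singleton_iff_unique_mem.mpr
        ⟨mem_filter.mpr hB, fun B' hB' => hunique B' (mem_filter.mp hB')⟩⟩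
  rwa [card_powersetCard, card_univ, mul_one] at hcount

theorem card_mul_choose_sub [Fintype α] (h𝓑 : IsSteinerSystem t 𝓑)
    (hblocks : ∀ B ∈ 𝓑, #B = w) (htw : t ≤ w) :
    #𝓑 * (Fintype.card α - t).choose (w - t) = (Fintype.card α).choose w := by
  refine Nat.eq_of_mul_eq_mul_right (Nat.choose_pos htw) ?_
  rw [Nat.choose_mul htw, ← h𝓑.card_mul_choose hblocks]
  ring

end IsSteinerSystem

theorem steiner_complement_diameter_perfect_general (n w t : ℕ) (htw : t ≤ w)
    (hw : 2 * w ≤ n) (𝓑 : Finset (Finset (Fin n)))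
    (hblocks : ∀ B ∈ 𝓑, B.card = w)
    (hsteiner : ∀ T : Finset (Fin n), T.card = t → ∃! B, B ∈ 𝓑 ∧ T ⊆ B) :
    (∀ X ∈ 𝓑.image (fun B => Bᶜ), X.card = n - w) ∧
    (∀ X₁ ∈ 𝓑.image (fun B => Bᶜ), ∀ X₂ ∈ 𝓑.image (fun B => Bᶜ),
      X₁ ≠ X₂ → w - t + 1 ≤ (X₁ \ X₂).card) ∧
    (𝓑.image (fun B => Bᶜ)).card * Nat.choose (n - t) (w - t) = Nat.choose n (n - w) ∧
    (∀ A : Finset (Finset (Fin n)), (∀ S ∈ A, S.card = n - w) →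
      (∀ S₁ ∈ A, ∀ S₂ ∈ A, (S₁ \ S₂).card ≤ w - t) →
      A.card ≤ Nat.choose (n - t) (w - t)) := by
  have h𝓑 : IsSteinerSystem t 𝓑 := hsteiner
  have hcard : ∀ X ∈ 𝓑.image (fun B => Bᶜ), #X = n - w := by
    simp only [mem_image]
    rintro _ ⟨B, hB, rfl⟩
    rw [card_compl, hblocks B hB, Fintype.card_fin]
  have hdist : ∀ X₁ ∈ 𝓑.image (fun B => Bᶜ), ∀ X₂ ∈ 𝓑.image (fun B => Bᶜ),
      X₁ ≠ X₂ → w - t + 1 ≤ #(X₁ \ X₂) := by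
    simp only [mem_image]
    rintro _ ⟨B₁, h₁, rfl⟩ _ ⟨B₂, h₂, rfl⟩ hne
    rw [compl_sdiff_compl]
    exact h𝓑.sub_add_one_le_card_sdiff hblocks h₂ h₁ fun h => hne (congrArg _ h.symm)
  have hsize : #(𝓑.image (fun B => Bᶜ)) * (n - t).choose (w - t) = n.choose (n - w) := by
    rw [card_image_of_injective _ compl_injective, Nat.choose_symm (by omega)]
    simpa using h𝓑.card_mul_choose_sub hblocks htw
  refine ⟨hcard, hdist, hsize, fun A hA hAdiam => ?_⟩
  have hpos : 0 < #(𝓑.image (fun B => Bᶜ)) :=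
    Nat.pos_of_mul_pos_right (hsize ▸ Nat.choose_pos (Nat.sub_le n w))
  have hbound := card_mul_card_le_choose_of_diam_lt_dist hA hcard hAdiam hdist
  rw [Fintype.card_fin, ← hsize, mul_comm (#_)] at hbound
  exact Nat.le_of_mul_le_mul_left hbound hpos

/-- The complement of a Steiner system S(t,w,n) is a diameter perfect code:
its members are `(n-w)`-subsets, any two distinct members have Johnson distance
at least `w - t + 1`, it attains the code-anticode bound
`|𝓑̄| * C(n-t, w-t) = C(n, n-w)`, and every anticode of `(n-w)`-subsets with
pairwise Johnson distance at most `w - t` has size at most `C(n-t, w-t)`. -/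
theorem steiner_complement_diameter_perfect (n w t : ℕ) (ht : 1 ≤ t) (htw : t ≤ w)
    (hw : 2 * w ≤ n) (𝓑 : Finset (Finset (Fin n)))
    (hblocks : ∀ B ∈ 𝓑, B.card = w)
    (hsteiner : ∀ T : Finset (Fin n), T.card = t → ∃! B, B ∈ 𝓑 ∧ T ⊆ B) :
    (∀ X ∈ 𝓑.image (fun B => Bᶜ), X.card = n - w) ∧
    (∀ X₁ ∈ 𝓑.image (fun B => Bᶜ), ∀ X₂ ∈ 𝓑.image (fun B => Bᶜ),
      X₁ ≠ X₂ → w - t + 1 ≤ (X₁ \ X₂).card) ∧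
    (𝓑.image (fun B => Bᶜ)).card * Nat.choose (n - t) (w - t) = Nat.choose n (n - w) ∧
    (∀ A : Finset (Finset (Fin n)), (∀ S ∈ A, S.card = n - w) →
      (∀ S₁ ∈ A, ∀ S₂ ∈ A, (S₁ \ S₂).card ≤ w - t) →
      A.card ≤ Nat.choose (n - t) (w - t)) :=
  steiner_complement_diameter_perfect_general n w t htw hw 𝓑 hblocks hsteiner
end

section
/- Let q ≥ 3 and let n, w, D be natural numbers with w ≤ n. If C is a set of words of length n and weight w over Fin q such that any two distinct members have Hamming distance at least D+1, and A is a set of words of length n and weight w over Fin q such that any two members have Hamming distance at most D, then |C| · |A| ≤ C(n,w) · (q−1)^w. -/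
/-!
The isometries of the Hamming space `(Fin q)ⁿ` that fix the zero word preserve weight, and they
act transitively on `J_q(n,w)`: relabel coordinates to move one support onto the other, then
apply a permutation of `Fin q` fixing `0` in each coordinate. For a group `G` acting transitively
by isometries on `S`, a code `C ⊆ S` with distances `> D` and an anticode `A ⊆ S` of diameter
`≤ D`, no `g` maps two different points of `A` into `C`; so the transporter sets
`{g | g • a = c}`, `(c, a) ∈ C × A`, are pairwise disjoint, and each has `|G| / |S|` elements.
-/

def wt {n q : ℕ} (x : Fin n → Fin q) : ℕ :=
  (Finset.univ.filter fun i => (x i : ℕ) ≠ 0).card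

open Finset Equiv MulAction

section CodeAnticode

variable {G X : Type*} [Group G] [MulAction G X]

lemma card_filter_smul_eq_smul [Fintype G] [DecidableEq X] (a : X) (h : G) :
    #{g : G | g • a = h • a} = Nat.card (stabilizer G a) := by
  rw [Nat.card_eq_fintype_card, Fintype.card_subtype]
  exact card_equiv (Equiv.mulLeft h⁻¹) (by simp [mul_smul, inv_smul_eq_iff])

lemma ncard_orbit_mul_card_filter_smul_eq [Fintype G] [DecidableEq X] {a c : X}
    (hc : c ∈ orbit G a) : (orbit G a).ncard * #{g : G | g • a = c} = Fintype.card G := by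
  obtain ⟨h, rfl⟩ := hc
  rw [card_filter_smul_eq_smul, ← index_stabilizer, mul_comm, Subgroup.card_mul_index,
    Nat.card_eq_fintype_card]

lemma card_mul_card_le_card_of_orbit_eq [Finite G] [DecidableEq X] {D : ℕ} (d : X → X → ℕ)
    (hd : ∀ (g : G) x y, d (g • x) (g • y) = d x y) (S C A : Finset X)
    (hS : ∀ x ∈ S, orbit G x = S) (hCS : C ⊆ S) (hAS : A ⊆ S)
    (hC : ∀ c₁ ∈ C, ∀ c₂ ∈ C, c₁ ≠ c₂ → D < d c₁ c₂) (hA : ∀ a₁ ∈ A, ∀ a₂ ∈ A, d a₁ a₂ ≤ D) :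
    #C * #A ≤ #S := by
  classical
  have := Fintype.ofFinite G
  let transporters (p : X × X) : Finset G := {g | g • p.2 = p.1}
  have hcard : ∀ p ∈ C ×ˢ A, #S * #(transporters p) = Fintype.card G := by
    intro p hp
    obtain ⟨hc, ha⟩ := mem_product.1 hp
    have := ncard_orbit_mul_card_filter_smul_eq (G := G) (by rw [hS _ (hAS ha)]; exact hCS hc)
    rwa [hS _ (hAS ha), Set.ncard_coe_finset] at this
  have hdisj : (↑(C ×ˢ A) : Set (X × X)).PairwiseDisjoint transporters := by
    rintro ⟨c₁, a₁⟩ hp₁ ⟨c₂, a₂⟩ hp₂ hne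
    simp only [coe_product, Set.mem_prod, mem_coe] at hp₁ hp₂
    refine disjoint_left.2 fun g hg₁ hg₂ => hne ?_
    simp only [transporters, mem_filter, mem_univ, true_and] at hg₁ hg₂
    obtain rfl : c₁ = c₂ := by
      by_contra hc
      have := hC _ hp₁.1 _ hp₂.1 hc
      rw [← hg₁, ← hg₂, hd] at this
      exact (hA _ hp₁.2 _ hp₂.2).not_gt this
    rw [← hg₂, smul_left_cancel_iff] at hg₁
    rw [hg₁]
  have hsum : ∑ p ∈ C ×ˢ A, #(transporters p) ≤ Fintype.card G := by
    rw [← card_biUnion hdisj]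
    exact card_le_univ _
  have hG : #C * #A * Fintype.card G ≤ #S * Fintype.card G :=
    calc #C * #A * Fintype.card G = ∑ p ∈ C ×ˢ A, #S * #(transporters p) := by
          rw [sum_congr rfl hcard, sum_const, card_product, smul_eq_mul]
      _ = #S * ∑ p ∈ C ×ˢ A, #(transporters p) := (mul_sum _ _ _).symm
      _ ≤ #S * Fintype.card G := Nat.mul_le_mul_left _ hsum
  exact Nat.le_of_mul_le_mul_right hG Fintype.card_pos

end CodeAnticode

section HammingIsometries

variable {ι α : Type*} [Fintype ι] [DecidableEq α]

lemma hammingDist_comp_perm (π : Perm ι) (x y : ι → α) :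
    hammingDist (x ∘ π) (y ∘ π) = hammingDist x y :=
  card_equiv π (by simp)

variable [Zero α]

variable (ι α) in
def zeroFixingIsometries : Subgroup (Perm (ι → α)) where
  carrier := {σ | σ 0 = 0 ∧ ∀ x y, hammingDist (σ x) (σ y) = hammingDist x y}
  mul_mem' := by
    rintro σ τ ⟨hσ0, hσ⟩ ⟨hτ0, hτ⟩
    exact ⟨by simp [hσ0, hτ0], fun x y => by simp [hσ, hτ]⟩
  one_mem' := ⟨rfl, fun _ _ => rfl⟩
  inv_mem' := by
    rintro σ ⟨hσ0, hσ⟩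
    refine ⟨by rw [Perm.inv_eq_iff_eq, hσ0], fun x y => ?_⟩
    rw [← hσ]
    simp

lemma hammingNorm_apply_of_mem {σ : Perm (ι → α)} (hσ : σ ∈ zeroFixingIsometries ι α)
    (x : ι → α) : hammingNorm (σ x) = hammingNorm x := by
  rw [← hammingDist_zero_right, ← hσ.1, hσ.2, hammingDist_zero_right]

lemma relabel_mem_zeroFixingIsometries (π : Perm ι) (τ : ι → Perm α) (hτ : ∀ i, τ i 0 = 0) :
    (π.arrowCongr (Equiv.refl α)).trans (Equiv.piCongrRight τ) ∈ zeroFixingIsometries ι α := by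
  refine ⟨funext fun i => hτ i, fun x y => ?_⟩
  change hammingDist (fun i => τ i (x (π.symm i))) (fun i => τ i (y (π.symm i))) = _
  rw [hammingDist_comp (fun i => τ i) fun i => (τ i).injective]
  exact hammingDist_comp_perm π.symm x y

lemma exists_mem_zeroFixingIsometries_apply_eq [DecidableEq ι] {x y : ι → α}
    (h : hammingNorm x = hammingNorm y) : ∃ σ ∈ zeroFixingIsometries ι α, σ x = y := by
  obtain ⟨π, hπ⟩ := (Set.powersetCard.isPretransitive (α := ι) (n := hammingNorm x)).exists_smul_eq
    ⟨({i | x i ≠ 0} : Finset ι), rfl⟩ ⟨({i | y i ≠ 0} : Finset ι), h.symm⟩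
  have hsupp : ∀ i, x (π.symm i) = 0 ↔ y i = 0 := by
    intro i
    have := congrArg (i ∈ ·.val) hπ
    simp only [Set.powersetCard.coe_smul, mem_smul_finset, mem_filter, mem_univ, true_and,
      Perm.smul_def, ← eq_symm_apply, exists_eq_right] at this
    exact not_iff_not.1 (Iff.of_eq this)
  refine ⟨_, relabel_mem_zeroFixingIsometries π (fun i => swap (x (π.symm i)) (y i)) fun i => ?_,
    funext fun i => swap_apply_left _ _⟩
  by_cases hy : y i = 0
  · rw [hy, (hsupp i).2 hy, swap_self, refl_apply]
  · exact swap_apply_of_ne_of_ne (mt (hsupp i).1 hy ∘ Eq.symm) (Ne.symm hy)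

lemma orbit_zeroFixingIsometries [DecidableEq ι] (x : ι → α) :
    orbit (zeroFixingIsometries ι α) x = {y | hammingNorm y = hammingNorm x} := by
  ext y
  constructor
  · rintro ⟨σ, rfl⟩
    exact hammingNorm_apply_of_mem σ.2 x
  · intro hy
    obtain ⟨σ, hσ, rfl⟩ := exists_mem_zeroFixingIsometries_apply_eq hy.symm
    exact ⟨⟨σ, hσ⟩, rfl⟩

lemma card_filter_support_eq [DecidableEq ι] [Fintype α] (s : Finset ι) :
    #{x : ι → α | ({i | x i ≠ 0} : Finset ι) = s} = (Fintype.card α - 1) ^ #s := by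
  have hpi : ({x : ι → α | ({i | x i ≠ 0} : Finset ι) = s} : Finset _) =
      Fintype.piFinset fun i => if i ∈ s then {0}ᶜ else {0} := by
    ext x
    simp only [Finset.ext_iff, mem_filter, mem_univ, true_and, Fintype.mem_piFinset]
    refine forall_congr' fun i => ?_
    split_ifs with hi <;> simp [hi]
  rw [hpi, Fintype.card_piFinset]
  simp only [apply_ite card, card_compl, card_singleton, prod_ite_mem, univ_inter, prod_const]

lemma card_filter_hammingNorm_eq [DecidableEq ι] [Fintype α] (w : ℕ) :
    #{x : ι → α | hammingNorm x = w} = (Fintype.card ι).choose w * (Fintype.card α - 1) ^ w := by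
  have hmaps : (({x | hammingNorm x = w} : Finset (ι → α)) : Set (ι → α)).MapsTo
      (fun x => ({i | x i ≠ 0} : Finset ι)) (powersetCard w (univ : Finset ι)) := fun x hx =>
    mem_powersetCard.2 ⟨subset_univ _, (mem_filter.1 hx).2⟩
  rw [card_eq_sum_card_fiberwise hmaps, sum_congr rfl fun s hs => ?_, sum_const,
    card_powersetCard, card_univ, smul_eq_mul]
  rw [filter_filter, ← (mem_powersetCard.1 hs).2, ← card_filter_support_eq s]
  congr 1
  refine filter_congr fun x _ => ⟨And.right, fun h => ⟨?_, h⟩⟩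
  rw [hammingNorm, h]

end HammingIsometries

lemma wt_eq_hammingNorm {n q : ℕ} [NeZero q] (x : Fin n → Fin q) : wt x = hammingNorm x := by
  simp [wt, hammingNorm]

theorem code_anticode_Jq_general (q n w D : ℕ) (hq : 3 ≤ q)
    (C A : Finset (Fin n → Fin q))
    (hC : ∀ c ∈ C, wt c = w) (hA : ∀ a ∈ A, wt a = w)
    (hCdist : ∀ c₁ ∈ C, ∀ c₂ ∈ C, c₁ ≠ c₂ → D + 1 ≤ hammingDist c₁ c₂)
    (hAdiam : ∀ a₁ ∈ A, ∀ a₂ ∈ A, hammingDist a₁ a₂ ≤ D) :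
    C.card * A.card ≤ Nat.choose n w * (q - 1) ^ w := by
  have : NeZero q := ⟨by omega⟩
  set S : Finset (Fin n → Fin q) := {x | hammingNorm x = w}
  have hS : ∀ x ∈ S, orbit (zeroFixingIsometries (Fin n) (Fin q)) x = S := fun x hx => by
    rw [orbit_zeroFixingIsometries, (mem_filter.1 hx).2, coe_filter]
    simp
  have hsub : ∀ B : Finset (Fin n → Fin q), (∀ b ∈ B, wt b = w) → B ⊆ S := fun B hB b hb => by
    simp [S, ← wt_eq_hammingNorm, hB b hb]
  calc #C * #A ≤ #S := card_mul_card_le_card_of_orbit_eq hammingDist (fun σ => σ.2.2) S C A hS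
        (hsub C hC) (hsub A hA) hCdist hAdiam
    _ = n.choose w * (q - 1) ^ w := by simp [S, card_filter_hammingNorm_eq]

/-- Code-anticode bound for J_q(n,w): if the code `C` has minimum Hamming
distance at least `D+1` and the anticode `A` has Hamming diameter at most `D`,
both consisting of words of length `n` and weight `w` over `Fin q`, `q ≥ 3`,
then `|C| * |A| ≤ C(n,w) * (q-1)^w`. -/
theorem code_anticode_Jq (q n w D : ℕ) (hq : 3 ≤ q) (hw : w ≤ n)
    (C A : Finset (Fin n → Fin q))
    (hC : ∀ c ∈ C, wt c = w) (hA : ∀ a ∈ A, wt a = w)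
    (hCdist : ∀ c₁ ∈ C, ∀ c₂ ∈ C, c₁ ≠ c₂ → D + 1 ≤ hammingDist c₁ c₂)
    (hAdiam : ∀ a₁ ∈ A, ∀ a₂ ∈ A, hammingDist a₁ a₂ ≤ D) :
    C.card * A.card ≤ Nat.choose n w * (q - 1) ^ w :=
  code_anticode_Jq_general q n w D hq C A hC hA hCdist hAdiam
end

section
/- Let n ≥ 6 be even. Then there exists a set C of words of length n and weight 3 over Fin n such that any two distinct members of C have Hamming distance at least 4 and every 3-element subset of Fin n is the support of exactly one codeword of C; moreover, no such set of words exists over Fin q for any q ≤ n−1. (That is, q₀(3,n) = n for even n.) -/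
/-- The support of a word `x : Fin n → Fin q`: the set of nonzero coordinates. -/
def supp {n q : ℕ} (x : Fin n → Fin q) : Finset (Fin n) :=
  Finset.univ.filter fun i => (x i : ℕ) ≠ 0

/-- `C` is an `(n, w+1, w)_q` code with minimum Hamming distance `w + 1` in which
every `w`-element subset of `Fin n` is the support of exactly one codeword. -/
def IsPerfectSupportCode (n w q : ℕ) (C : Finset (Fin n → Fin q)) : Prop :=
  (∀ c ∈ C, wt c = w) ∧
  (∀ c₁ ∈ C, ∀ c₂ ∈ C, c₁ ≠ c₂ → w + 1 ≤ hammingDist c₁ c₂) ∧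
  (∀ S : Finset (Fin n), S.card = w → ∃! c, c ∈ C ∧ supp c = S)

/-!
For even `n`, the round-robin tournament properly colors the edges of `K_n` with `n - 1`
colors. The codeword on a triple `S` carries at `i ∈ S` the color, shifted to be nonzero, of
the edge `S \ {i}`; when two supports share two points, properness makes the codewords differ at
all four points of the union. Conversely, at a fixed coordinate `i` the symbols of the codewords
supported on `{i, a, b}` properly color the complete graph on the other `n - 1` coordinates with
the `q - 1` nonzero symbols, and a complete graph on an odd number `N > 1` of vertices needs `N`
colors.
-/

open Finset

lemma Finset.exists_eq_pair_of_mem {α : Type*} [DecidableEq α] {s : Finset α} {a : α}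
    (hs : s.card = 2) (ha : a ∈ s) : ∃ b, b ≠ a ∧ s = {a, b} := by
  obtain ⟨b, hb⟩ := card_eq_one.mp (by rw [card_erase_of_mem ha, hs] : (s.erase a).card = 1)
  refine ⟨b, (mem_erase.mp (hb ▸ mem_singleton_self b)).1, ?_⟩
  rw [← insert_erase ha, hb]

/-- Edges of the complete graph on `V` are its two-element finsets; `col` is only read on them. -/
def IsProperEdgeColoring {V κ : Type*} [DecidableEq V] (col : Finset V → κ) : Prop :=
  ∀ ⦃a b b' : V⦄, a ≠ b → a ≠ b' → b ≠ b' → col {a, b} ≠ col {a, b'}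

namespace IsProperEdgeColoring

variable {V κ : Type*} [DecidableEq V] {col : Finset V → κ}

lemma comp {W κ' : Type*} [DecidableEq W] (hcol : IsProperEdgeColoring col) (f : W ↪ V)
    {g : κ → κ'} (hg : Function.Injective g) :
    IsProperEdgeColoring fun e : Finset W => g (col (e.map f)) := by
  intro a b b' hab hab' hbb'
  simpa using hg.ne (hcol (f.injective.ne hab) (f.injective.ne hab') (f.injective.ne hbb'))

lemma apply_ne_apply (hcol : IsProperEdgeColoring col) {e f : Finset V} (he : e.card = 2)
    (hf : f.card = 2) (hef : e ≠ f) (hinter : (e ∩ f).Nonempty) : col e ≠ col f := by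
  obtain ⟨a, ha⟩ := hinter
  obtain ⟨b, hba, rfl⟩ := exists_eq_pair_of_mem he (mem_inter.mp ha).1
  obtain ⟨b', hb'a, rfl⟩ := exists_eq_pair_of_mem hf (mem_inter.mp ha).2
  exact hcol hba.symm hb'a.symm fun hbb' => hef (hbb' ▸ rfl)

/-- With fewer than `|V|` colors every vertex sees every color, so each color class is a
perfect matching, which is impossible when `|V|` is odd. -/
theorem card_le_card_of_odd [Fintype V] (hcol : IsProperEdgeColoring col) {K : Finset κ}
    (hK : ∀ ⦃a b⦄, a ≠ b → col {a, b} ∈ K) (hodd : Odd (Fintype.card V))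
    (hV : 1 < Fintype.card V) : Fintype.card V ≤ K.card := by
  classical
  by_contra! hlt
  have hsurj : ∀ a, ∀ c ∈ K, ∃ b, b ≠ a ∧ col {a, b} = c := by
    intro a c hc
    have himage : (univ.erase a).image (fun b => col {a, b}) = K := by
      refine eq_of_subset_of_card_le (fun c hc => ?_) ?_
      · obtain ⟨b, hb, rfl⟩ := mem_image.mp hc
        exact hK (mem_erase.mp hb).1.symm
      · rw [card_image_of_injOn, card_erase_of_mem (mem_univ a), card_univ]
        · omega
        · intro b hb b' hb' h
          by_contra hbb'
          exact hcol (mem_erase.mp hb).1.symm (mem_erase.mp hb').1.symm hbb' h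
    simpa [← himage] using hc
  obtain ⟨a₀, b₀, hab₀⟩ := Fintype.exists_pair_of_one_lt_card hV
  choose partner hpartner_ne hpartner using fun a => hsurj a _ (hK hab₀)
  have hinv : Function.Involutive partner := by
    intro a
    by_contra h
    exact hcol (hpartner_ne a) (hpartner_ne _).symm (Ne.symm h)
      (by rw [pair_comm, hpartner, hpartner])
  obtain ⟨a, ha⟩ := Equiv.Perm.exists_fixed_point_of_prime (p := 2) (n := 1)
    hodd.not_two_dvd_nat (σ := hinv.toPerm) (by ext a; simp [sq, hinv a])
  exact hpartner_ne a ha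

end IsProperEdgeColoring

/-- The round-robin tournament on `ZMod m ∪ {∞}`: `{a, b} ↦ a + b` and `{a, ∞} ↦ 2a`. -/
def roundRobin (m : ℕ) (e : Finset (Option (ZMod m))) : ZMod m :=
  (if none ∈ e then 2 else 1) * ∑ x ∈ e, x.getD 0

section RoundRobin

variable {m : ℕ}

lemma roundRobin_some_some {a b : ZMod m} (hab : a ≠ b) :
    roundRobin m {some a, some b} = a + b := by
  simp [roundRobin, sum_pair (Option.some_injective _ |>.ne hab)]

lemma roundRobin_some_none (a : ZMod m) : roundRobin m {some a, none} = 2 * a := by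
  simp [roundRobin]

lemma roundRobin_none_some (a : ZMod m) : roundRobin m {none, some a} = 2 * a := by
  rw [pair_comm, roundRobin_some_none]

theorem isProperEdgeColoring_roundRobin (hm : Odd m) : IsProperEdgeColoring (roundRobin m) := by
  have h2 : IsUnit (2 : ZMod m) := by
    simpa using (ZMod.isUnit_prime_iff_not_dvd Nat.prime_two).mpr hm.not_two_dvd_nat
  rintro (_ | a) (_ | b) (_ | b') hab hab' hbb' <;>
    simp only [ne_eq, Option.some.injEq, not_true_eq_false] at hab hab' hbb' ⊢
  · rw [roundRobin_none_some, roundRobin_none_some]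
    exact fun h => hbb' (h2.mul_left_cancel h)
  · rw [roundRobin_some_none, roundRobin_some_some hab', two_mul]
    exact fun h => hab' (add_left_cancel h)
  · rw [roundRobin_some_none, roundRobin_some_some hab, two_mul]
    exact fun h => hab (add_left_cancel h).symm
  · rw [roundRobin_some_some hab, roundRobin_some_some hab']
    exact fun h => hbb' (add_left_cancel h)

end RoundRobin

theorem exists_isProperEdgeColoring_fin {n : ℕ} [NeZero n] (hn : Even n) :
    ∃ col : Finset (Fin n) → Fin n, IsProperEdgeColoring col ∧ ∀ e, col e ≠ 0 := by
  obtain ⟨m, rfl⟩ : ∃ m, n = m + 1 := ⟨n - 1, by have := NeZero.ne n; omega⟩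
  have hm : Odd m := by simpa [Nat.even_add_one] using hn
  have : NeZero m := ⟨hm.pos.ne'⟩
  let f : Fin (m + 1) ↪ Option (ZMod m) :=
    (Fintype.equivFinOfCardEq (by simp)).symm.toEmbedding
  let g : ZMod m → Fin (m + 1) := fun c => ((ZMod.finEquiv m).symm c).succ
  refine ⟨fun e => g (roundRobin m (e.map f)), ?_, fun e => Fin.succ_ne_zero _⟩
  exact (isProperEdgeColoring_roundRobin hm).comp f
    ((Fin.succ_injective _).comp (ZMod.finEquiv m).symm.injective)

lemma mem_supp {n q : ℕ} {x : Fin n → Fin q} {i : Fin n} :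
    i ∈ supp x ↔ (x i : ℕ) ≠ 0 := by
  simp [supp]

section ColorCode

variable {n q : ℕ} [NeZero q]

def colorWord (col : Finset (Fin n) → Fin q) (S : Finset (Fin n)) : Fin n → Fin q :=
  fun i => if i ∈ S then col (S.erase i) else 0

def colorCode (col : Finset (Fin n) → Fin q) : Finset (Fin n → Fin q) :=
  (univ.powersetCard 3).image (colorWord col)

variable {col : Finset (Fin n) → Fin q}

lemma supp_colorWord (h0 : ∀ e, col e ≠ 0) (S : Finset (Fin n)) :
    supp (colorWord col S) = S := by
  ext i
  by_cases hi : i ∈ S <;> simp [mem_supp, colorWord, hi, h0]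

lemma colorWord_apply_ne (hcol : IsProperEdgeColoring col) {S T : Finset (Fin n)}
    (hS : S.card = 3) (hT : T.card = 3) (hST : S ≠ T) (hinter : (S ∩ T).card = 2) {i : Fin n}
    (hi : i ∈ S ∩ T) : colorWord col S i ≠ colorWord col T i := by
  obtain ⟨hiS, hiT⟩ := mem_inter.mp hi
  simp only [colorWord, hiS, hiT, if_true]
  refine hcol.apply_ne_apply (by simp [card_erase_of_mem, hiS, hS])
    (by simp [card_erase_of_mem, hiT, hT]) (fun h => hST (erase_injOn' i hiS hiT h)) ?_
  simp [← card_pos, erase_inter, inter_erase, card_erase_of_mem hi, hinter]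

lemma le_hammingDist_colorWord (hcol : IsProperEdgeColoring col) (h0 : ∀ e, col e ≠ 0)
    {S T : Finset (Fin n)} (hS : S.card = 3) (hT : T.card = 3) (hST : S ≠ T) :
    4 ≤ hammingDist (colorWord col S) (colorWord col T) := by
  have hsdiff : ∀ i ∈ S \ T ∪ T \ S, colorWord col S i ≠ colorWord col T i := by
    intro i hi
    rcases mem_union.mp hi with h | h <;> obtain ⟨h₁, h₂⟩ := mem_sdiff.mp h <;>
      simp [colorWord, h₁, h₂, h0, eq_comm]
  have hle : (S ∩ T).card ≤ 2 := by
    by_contra! h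
    exact hST (eq_of_subset_of_card_le (inter_eq_left.mp
      (eq_of_subset_of_card_le inter_subset_left (by omega))) (by omega))
  have hcardS := card_sdiff_add_card_inter S T
  have hcardT := card_sdiff_add_card_inter T S
  rw [inter_comm] at hcardT
  rcases hle.lt_or_eq with hlt | h2
  · calc 4 ≤ (S \ T ∪ T \ S).card := by
          rw [card_union_of_disjoint disjoint_sdiff_sdiff]; omega
      _ ≤ _ := card_le_card fun i hi => by simpa using hsdiff i hi
  · calc 4 = (S ∪ T).card := by have := card_union_add_card_inter S T; omega
      _ ≤ _ := card_le_card fun i hi => by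
          by_cases hiST : i ∈ S ∩ T
          · simpa using colorWord_apply_ne hcol hS hT hST h2 hiST
          · simpa using hsdiff i (by grind)

theorem isPerfectSupportCode_colorCode (hcol : IsProperEdgeColoring col)
    (h0 : ∀ e, col e ≠ 0) :
    IsPerfectSupportCode n 3 q (colorCode col) := by
  refine ⟨?_, ?_, fun S hS => ⟨colorWord col S,
    ⟨mem_image_of_mem _ (mem_powersetCard_univ.mpr hS), supp_colorWord h0 S⟩, ?_⟩⟩
  · intro c hc
    obtain ⟨S, hS, rfl⟩ := mem_image.mp hc
    change (supp _).card = 3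
    rw [supp_colorWord h0, (mem_powersetCard_univ.mp hS)]
  · intro _ h₁ _ h₂ hne
    obtain ⟨S, hS, rfl⟩ := mem_image.mp h₁
    obtain ⟨T, hT, rfl⟩ := mem_image.mp h₂
    exact le_hammingDist_colorWord hcol h0 (mem_powersetCard_univ.mp hS)
      (mem_powersetCard_univ.mp hT) fun h => hne (h ▸ rfl)
  · rintro c ⟨hc, hsupp⟩
    obtain ⟨T, -, rfl⟩ := mem_image.mp hc
    rw [← hsupp, supp_colorWord h0]

end ColorCode

lemma apply_ne_of_card_supp_union_le {n q : ℕ} {x y : Fin n → Fin q}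
    (h : (supp x ∪ supp y).card ≤ hammingDist x y) {i : Fin n} (hi : i ∈ supp x ∪ supp y) :
    x i ≠ y i := by
  have hsub : univ.filter (fun j => x j ≠ y j) ⊆ supp x ∪ supp y := by
    intro j hj
    by_contra hj'
    simp only [mem_union, mem_supp, not_or, not_not] at hj'
    simp [Fin.ext_iff, hj'] at hj
  have hi' := (eq_of_subset_of_card_le hsub h).symm ▸ hi
  simpa using hi'

namespace IsPerfectSupportCode

variable {n w q : ℕ} {C : Finset (Fin n → Fin q)}

lemma apply_ne_of_supp_subset_insert (hC : IsPerfectSupportCode n w q C)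
    {c c' : Fin n → Fin q} (hc : c ∈ C) (hc' : c' ∈ C) (hne : c ≠ c') {b : Fin n}
    (hsub : supp c' ⊆ insert b (supp c)) {i : Fin n} (hi : i ∈ supp c) : c i ≠ c' i := by
  refine apply_ne_of_card_supp_union_le ?_ (mem_union_left _ hi)
  calc (supp c ∪ supp c').card ≤ (insert b (supp c)).card :=
        card_le_card (union_subset (subset_insert _ _) hsub)
    _ ≤ (supp c).card + 1 := card_insert_le _ _
    _ = w + 1 := by rw [← hC.1 c hc]; rfl
    _ ≤ hammingDist c c' := hC.2.1 c hc c' hc' hne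

/-- The symbols at a fixed coordinate `i` properly color the complete graph on the other
`n - 1` coordinates: the edge `{a, b}` gets the symbol at `i` of the codeword on `{i, a, b}`. -/
theorem length_le_of_even (hC : IsPerfectSupportCode n 3 q C) (hn : Even n) (h2 : 2 < n) :
    n ≤ q := by
  let i : Fin n := ⟨0, by omega⟩
  obtain ⟨S, -, hS⟩ := (univ : Finset (Fin n)).exists_subset_card_eq (by simp; omega : 3 ≤ _)
  obtain ⟨c, -⟩ := hC.2.2 S hS
  have : NeZero q := ⟨(c i).pos.ne'⟩
  choose! cw hcwC hcw using fun S (hS : S.card = 3) => (hC.2.2 S hS).exists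
  let col : Finset {j // j ≠ i} → Fin q := fun e => cw (insert i (e.map (.subtype _))) i
  have hcard {a b : {j // j ≠ i}} (hab : a ≠ b) : ({i, a.1, b.1} : Finset (Fin n)).card = 3 :=
    card_eq_three.mpr ⟨i, a, b, a.2.symm, b.2.symm, Subtype.val_injective.ne hab, rfl⟩
  have hcol : IsProperEdgeColoring col := by
    intro a b b' hab hab' hbb'
    simp only [col, map_insert, map_singleton, Function.Embedding.coe_subtype]
    refine hC.apply_ne_of_supp_subset_insert (hcwC _ (hcard hab)) (hcwC _ (hcard hab'))
      (fun h => ?_) (b := b'.1) ?_ ?_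
    · have hb' : b'.1 ∈ ({i, a.1, b.1} : Finset (Fin n)) := by
        rw [← hcw _ (hcard hab), h, hcw _ (hcard hab')]
        simp
      simp only [mem_insert, mem_singleton, ← Subtype.ext_iff] at hb'
      exact hb'.elim b'.2 (·.elim (hab' ·.symm) (hbb' ·.symm))
    · rw [hcw _ (hcard hab), hcw _ (hcard hab')]
      grind
    · simp [hcw _ (hcard hab)]
  have hK {a b : {j // j ≠ i}} (hab : a ≠ b) : col {a, b} ∈ univ.erase 0 := by
    have hi : i ∈ supp (cw {i, a.1, b.1}) := by simp [hcw _ (hcard hab)]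
    simpa [col, mem_supp] using hi
  have hV : Fintype.card {j // j ≠ i} = n - 1 := by simp [Fintype.card_subtype_compl]
  have := hcol.card_le_card_of_odd (fun _ _ => hK) (hV ▸ Nat.Even.sub_odd (by omega) hn odd_one)
    (by omega)
  rw [hV, card_erase_of_mem (mem_univ _), card_univ, Fintype.card_fin] at this
  omega

end IsPerfectSupportCode

/-- For even `n ≥ 6`, the smallest alphabet size admitting an `(n,4,3)_q` code
with a codeword on every `3`-subset is `q₀(3,n) = n`. -/
theorem q0_three_even (n : ℕ) (hn : 6 ≤ n) (heven : Even n) :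
    (∃ C : Finset (Fin n → Fin n), IsPerfectSupportCode n 3 n C) ∧
    (∀ q : ℕ, q ≤ n - 1 → ¬ ∃ C : Finset (Fin n → Fin q), IsPerfectSupportCode n 3 q C) := by
  have : NeZero n := ⟨by omega⟩
  obtain ⟨col, hcol, h0⟩ := exists_isProperEdgeColoring_fin heven
  refine ⟨⟨colorCode col, isPerfectSupportCode_colorCode hcol h0⟩, ?_⟩
  rintro q hq ⟨C, hC⟩
  have := hC.length_le_of_even heven (by omega)
  omega
end
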